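/- Theorem 2(2): In an n-player mining game (m₁,…,mₙ) with m₁ ≥ m₂ ≥ ⋯ ≥ mₙ, the strategy profile in which exactly pool 1 plays Insightful and all other pools play RHonest (i.e., Q = {1}) is a pure Nash equilibrium if and only if m₁ ≥ 1/3 and m₂ ≤ g(m₁), where g(y) := (−y³ + 2y² + y − 1)/(2y² + 4y − 3). -/

import Mathlib

/-- `f(y) := y²·(2−3y)/(1−2y)`. -/
noncomputable def f (y : ℝ) : ℝ := y^2 * (2 - 3*y) / (1 - 2*y)

/-- `g(y) := (−y³ + 2y² + y − 1)/(2y² + 4y − 3)`. -/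
noncomputable def g (y : ℝ) : ℝ := (-y^3 + 2*y^2 + y - 1) / (2*y^2 + 4*y - 3)

/-- `S(Q) := ∑_{j∈Q} m_j(1−m_j)`. -/
noncomputable def S {n : ℕ} (m : Fin n → ℝ) (Q : Finset (Fin n)) : ℝ :=
  ∑ j ∈ Q, m j * (1 - m j)

/-- Expected reward of pool `i` when the set of insightful pools is `Q`. -/
noncomputable def ER {n : ℕ} (m : Fin n → ℝ) (Q : Finset (Fin n)) (i : Fin n) : ℝ :=
  if i ∈ Q then f (m i) + 2 * m i * S m Q else m i + 2 * m i * S m Q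

/-- Relative revenue (utility) of pool `i`. -/
noncomputable def RREV {n : ℕ} (m : Fin n → ℝ) (Q : Finset (Fin n)) (i : Fin n) : ℝ :=
  ER m Q i / ∑ j, ER m Q j

/-- The profile obtained from `Q` when pool `i` unilaterally switches its strategy. -/
def switch {n : ℕ} (i : Fin n) (Q : Finset (Fin n)) : Finset (Fin n) :=
  if i ∈ Q then Q.erase i else insert i Q

/-- `Q` is a pure Nash equilibrium: no pool can strictly increase its relative
revenue by unilaterally switching its own strategy. -/
def IsNash {n : ℕ} (m : Fin n → ℝ) (Q : Finset (Fin n)) : Prop :=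
  ∀ i : Fin n, RREV m (switch i Q) i ≤ RREV m Q i

lemma f_pos {y : ℝ} (h0 : 0 < y) (hh : y < 1/2) : 0 < f y := by
  unfold f
  apply div_pos (by nlinarith) (by linarith)

lemma f_mul {y : ℝ} (hh : y < 1/2) : f y * (1 - 2*y) = y^2 * (2 - 3*y) := by
  unfold f
  rw [div_mul_cancel₀]
  intro h; rw [sub_eq_zero] at h; nlinarith [h]

/-- Condition for pool 0 (the insightful pool) not wanting to deviate. -/
lemma condA {y : ℝ} (h0 : 0 < y) (hh : y < 1/2) :
    y ≤ (f y + 2*y*(y*(1-y))) / (f y + (1 - y) + 2*y*(1-y)) ↔ 1/3 ≤ y := by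
  have hfp := f_pos h0 hh
  have hT : 0 < f y + (1 - y) + 2*y*(1-y) := by nlinarith
  have hf := f_mul hh
  rw [le_div_iff₀ hT]
  have key : (f y + 2*y*(y*(1-y)) - y*(f y + (1 - y) + 2*y*(1-y))) * (1 - 2*y)
      = y*(1-y)^2*(3*y-1) := by linear_combination (1-y) * hf
  constructor
  · intro h
    by_contra hc
    push_neg at hc
    nlinarith [mul_pos h0 (mul_pos (by linarith : (0:ℝ) < 1 - y) (by linarith : (0:ℝ) < 1 - y))]
  · intro h
    nlinarith [mul_nonneg (mul_nonneg h0.le (sq_nonneg (1-y))) (by linarith : (0:ℝ) ≤ 3*y-1)]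

/-- Condition for an honest pool (with power `x`) not wanting to deviate, when the
insightful pool has power `y`. -/
lemma condB {x y : ℝ} (hx0 : 0 < x) (hxh : x < 1/2) (hy0 : 0 < y) (hyh : y < 1/2) :
    (f x + 2*x*(x*(1-x) + y*(1-y))) /
        (f y + f x + (1 - x - y) + 2*(x*(1-x) + y*(1-y)))
      ≤ x*(1 + 2*(y*(1-y))) / (f y + (1 - y) + 2*y*(1-y))
    ↔ x*(3 - 4*y - 2*y^2) ≤ y^3 - 2*y^2 - y + 1 := by
  have hfx := f_pos hx0 hxh
  have hfy := f_pos hy0 hyh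
  have hT : 0 < f y + (1 - y) + 2*y*(1-y) := by nlinarith
  have hT' : 0 < f y + f x + (1 - x - y) + 2*(x*(1-x) + y*(1-y)) := by nlinarith
  have hdx : (1:ℝ) - 2*x ≠ 0 := by intro h; rw [sub_eq_zero] at h; nlinarith [h]
  have hdy : (1:ℝ) - 2*y ≠ 0 := by intro h; rw [sub_eq_zero] at h; nlinarith [h]
  rw [div_le_div_iff₀ hT' hT]
  have key : x*(1 + 2*(y*(1-y))) * (f y + f x + (1 - x - y) + 2*(x*(1-x) + y*(1-y)))
        - (f x + 2*x*(x*(1-x) + y*(1-y))) * (f y + (1 - y) + 2*y*(1-y))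
      = x*(1-x)^2*((y^3 - 2*y^2 - y + 1) - x*(3 - 4*y - 2*y^2)) / ((1-2*x)*(1-2*y)) := by
    rw [eq_div_iff (mul_ne_zero hdx hdy)]
    linear_combination ((x*(1+2*(y*(1-y))) - ((1-y)+2*y*(1-y)) - f y)*(1-2*y)) * f_mul hxh + ((x*(1+2*(y*(1-y))) - 2*x*(x*(1-x)+y*(1-y)))*(1-2*x) - x^2*(2-3*x)) * f_mul hyh
  have hdp : (0:ℝ) < (1-2*x)*(1-2*y) := mul_pos (by linarith) (by linarith)
  have hxp : (0:ℝ) < x*(1-x)^2 :=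
    mul_pos hx0 (pow_pos (by linarith) 2)
  constructor
  · intro h
    have h1 : 0 ≤ x*(1-x)^2*((y^3 - 2*y^2 - y + 1) - x*(3 - 4*y - 2*y^2)) / ((1-2*x)*(1-2*y)) := by
      rw [← key]; linarith
    have h2 : 0 ≤ x*(1-x)^2*((y^3 - 2*y^2 - y + 1) - x*(3 - 4*y - 2*y^2)) := by
      by_contra hc
      push_neg at hc
      nlinarith [div_neg_of_neg_of_pos hc hdp]
    nlinarith [h2]
  · intro h
    have h2 : 0 ≤ x*(1-x)^2*((y^3 - 2*y^2 - y + 1) - x*(3 - 4*y - 2*y^2)) :=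
      mul_nonneg hxp.le (by linarith)
    have h1 : 0 ≤ x*(1-x)^2*((y^3 - 2*y^2 - y + 1) - x*(3 - 4*y - 2*y^2)) / ((1-2*x)*(1-2*y)) :=
      div_nonneg h2 hdp.le
    rw [← key] at h1
    linarith

theorem aux_main (n : ℕ) (m : Fin n → ℝ) (i0 i1 : Fin n)
    (h0v : (i0 : ℕ) = 0) (h1v : (i1 : ℕ) = 1)
    (hmono : ∀ i j : Fin n, i ≤ j → m j ≤ m i)
    (hpos : ∀ i, 0 < m i) (hhalf : ∀ i, m i < 1/2)
    (hsum : ∑ i, m i = 1) :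
    IsNash m ({i0} : Finset (Fin n)) ↔ (1/3 ≤ m i0 ∧ m i1 ≤ g (m i0)) := by
  have hne10 : i1 ≠ i0 := by
    intro h; rw [Fin.ext_iff, h1v, h0v] at h; omega
  have hy0 := hpos i0
  have hyh := hhalf i0
  -- S of Q = {i0}
  have hSQ : S m ({i0} : Finset (Fin n)) = m i0 * (1 - m i0) := by
    simp [S]
  have hERQ0 : ER m ({i0} : Finset (Fin n)) i0
      = f (m i0) + 2 * m i0 * (m i0 * (1 - m i0)) := by
    rw [ER, if_pos (Finset.mem_singleton_self i0), hSQ]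
  have hERQ : ∀ i, i ≠ i0 → ER m ({i0} : Finset (Fin n)) i
      = m i * (1 + 2*(m i0 * (1 - m i0))) := by
    intro i hi
    rw [ER, if_neg (by simpa using hi), hSQ]; ring
  have hrest : ∑ j ∈ Finset.univ.erase i0, m j = 1 - m i0 := by
    have h := Finset.add_sum_erase Finset.univ m (Finset.mem_univ i0)
    rw [hsum] at h; linarith
  have hTot : ∑ j, ER m ({i0} : Finset (Fin n)) j
      = f (m i0) + (1 - m i0) + 2*(m i0)*(1 - m i0) := by
    rw [← Finset.add_sum_erase Finset.univ _ (Finset.mem_univ i0), hERQ0,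
      Finset.sum_congr rfl (fun j hj => hERQ j (Finset.ne_of_mem_erase hj)),
      ← Finset.sum_mul, hrest]
    ring
  -- pool i0 switching
  have hsw0 : switch i0 ({i0} : Finset (Fin n)) = ∅ := by
    simp [switch]
  have hERe : ∀ j, ER m (∅ : Finset (Fin n)) j = m j := by
    intro j; simp [ER, S]
  have hRREVs0 : RREV m (switch i0 ({i0} : Finset (Fin n))) i0 = m i0 := by
    rw [hsw0, RREV]
    simp only [hERe]
    rw [hsum, div_one]
  have hcond0 : RREV m (switch i0 ({i0} : Finset (Fin n))) i0
        ≤ RREV m ({i0} : Finset (Fin n)) i0 ↔ 1/3 ≤ m i0 := by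
    rw [hRREVs0, RREV, hERQ0, hTot]
    exact condA hy0 hyh
  -- pool i ≠ i0 switching
  have hcondi : ∀ i, i ≠ i0 →
      (RREV m (switch i ({i0} : Finset (Fin n))) i ≤ RREV m ({i0} : Finset (Fin n)) i
        ↔ m i * (3 - 4*(m i0) - 2*(m i0)^2) ≤ (m i0)^3 - 2*(m i0)^2 - m i0 + 1) := by
    intro i hi
    have hnm : i ∉ ({i0} : Finset (Fin n)) := by simpa using hi
    have hswi : switch i ({i0} : Finset (Fin n)) = insert i {i0} := by
      rw [switch, if_neg hnm]
    have hS' : S m (insert i ({i0} : Finset (Fin n)))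
        = m i * (1 - m i) + m i0 * (1 - m i0) := by
      rw [S, Finset.sum_insert hnm, Finset.sum_singleton]
    have hERi : ER m (insert i ({i0} : Finset (Fin n))) i
        = f (m i) + 2 * m i * (m i * (1 - m i) + m i0 * (1 - m i0)) := by
      rw [ER, if_pos (Finset.mem_insert_self i _), hS']
    have hERi0' : ER m (insert i ({i0} : Finset (Fin n))) i0
        = f (m i0) + 2 * m i0 * (m i * (1 - m i) + m i0 * (1 - m i0)) := by
      rw [ER, if_pos (by simp), hS']
    have hrest2 : ∑ j ∈ Finset.univ \ insert i {i0}, m j = 1 - m i - m i0 := by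
      have h := Finset.sum_sdiff (f := m) (Finset.subset_univ (insert i ({i0} : Finset (Fin n))))
      rw [hsum, Finset.sum_insert hnm, Finset.sum_singleton] at h
      linarith
    have hTot' : ∑ j, ER m (insert i ({i0} : Finset (Fin n))) j
        = f (m i0) + f (m i) + (1 - m i - m i0)
          + 2*(m i * (1 - m i) + m i0 * (1 - m i0)) := by
      rw [← Finset.sum_sdiff (Finset.subset_univ (insert i ({i0} : Finset (Fin n)))),
        Finset.sum_insert hnm, Finset.sum_singleton, hERi, hERi0']
      have hout : ∀ j ∈ Finset.univ \ insert i ({i0} : Finset (Fin n)),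
          ER m (insert i ({i0} : Finset (Fin n))) j
            = m j * (1 + 2*(m i * (1 - m i) + m i0 * (1 - m i0))) := by
        intro j hj
        rw [ER, if_neg (Finset.mem_sdiff.mp hj).2, hS']; ring
      rw [Finset.sum_congr rfl hout, ← Finset.sum_mul, hrest2]
      ring
    rw [hswi, RREV, RREV, hERi, hTot', hERQ i hi, hTot]
    have h1 : m i * (1 + 2*(m i0 * (1 - m i0)))
        = m i * (1 + 2*(m i0 * (1 - m i0))) := rfl
    have := condB (hpos i) (hhalf i) hy0 hyh
    convert this using 2 <;> ring
  -- condition for i1 in terms of g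
  have hgiff : m i1 ≤ g (m i0)
      ↔ m i1 * (3 - 4*(m i0) - 2*(m i0)^2) ≤ (m i0)^3 - 2*(m i0)^2 - m i0 + 1 := by
    rw [g, le_div_iff_of_neg (by nlinarith : 2*(m i0)^2 + 4*(m i0) - 3 < 0)]
    constructor <;> intro h <;> nlinarith [h]
  constructor
  · intro hN
    exact ⟨hcond0.mp (hN i0), hgiff.mpr ((hcondi i1 hne10).mp (hN i1))⟩
  · rintro ⟨h13, hgle⟩ i
    by_cases hii : i = i0
    · subst hii
      exact hcond0.mpr h13
    · rw [hcondi i hii]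
      have hmle : m i ≤ m i1 := by
        apply hmono i1 i
        rw [Fin.le_def, h1v]
        have : (i : ℕ) ≠ 0 := fun h => hii (Fin.ext (by rw [h, h0v]))
        omega
      have hc : (0:ℝ) < 3 - 4*(m i0) - 2*(m i0)^2 := by nlinarith
      have h2 := hgiff.mp hgle
      nlinarith [mul_le_mul_of_nonneg_right hmle hc.le]

/-- Theorem 2(2): `Q = {1}` (only the largest pool insightful) is a pure Nash
equilibrium iff `m₁ ≥ 1/3` and `m₂ ≤ g(m₁)`. -/
theorem one_insightful_nash_iff (n : ℕ) (hn : 2 ≤ n) (m : Fin n → ℝ)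
    (hmono : ∀ i j : Fin n, i ≤ j → m j ≤ m i)
    (hpos : ∀ i, 0 < m i) (hhalf : ∀ i, m i < 1/2)
    (hsum : ∑ i, m i = 1) :
    IsNash m ({⟨0, by omega⟩} : Finset (Fin n)) ↔
      (1/3 ≤ m ⟨0, by omega⟩ ∧ m ⟨1, by omega⟩ ≤ g (m ⟨0, by omega⟩)) := by
  exact aux_main n m ⟨0, by omega⟩ ⟨1, by omega⟩ rfl rfl hmono hpos hhalf hsum
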